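/- Uniform bound on the third derivative of the Ornstein–Uhlenbeck semigroup: let γ denote the standard Gaussian measure on ℝ and for t ≥ 0 define P_tF(x) = ∫ F(e^{-t}x + √(1−e^{-2t}) y) dγ(y). If F : ℝ → ℝ is twice continuously differentiable with F, F′, F″ bounded, then for every t > 0 and every x ∈ ℝ, |(P_tF)‴(x)| ≤ (e^{-3t}/√(1−e^{-2t})) · ‖F″‖_∞ · ∫ |y| dγ(y) = (e^{-3t}/√(1−e^{-2t})) · ‖F″‖_∞ · √(2/π). -/

import Mathlib

/-!
Differentiating twice under the integral sign gives
`(P_t F)'' x = e^{-2t} ∫ F''(e^{-t} x + b y) dγ(y)` with `b = √(1 - e^{-2t})`. As `F''` is only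
continuous, the third derivative is moved onto the Gaussian density: `∫ φ(m + b y) dγ(y)` is the
integral of `φ` against `N(m, b²)`, whose density has `m`-derivative `(u - m) / b²` times itself,
so this derivative is at most `‖φ‖_∞ · E|u - m| / b² = ‖φ‖_∞ · E|Y| / b`.
-/

open MeasureTheory Real ProbabilityTheory

/-- The Ornstein–Uhlenbeck (Mehler) semigroup:
`P_t F (x) = ∫ F(e^{-t} x + √(1 − e^{-2t}) y) dγ(y)`. -/
noncomputable def ouSemigroup (t : ℝ) (F : ℝ → ℝ) (x : ℝ) : ℝ :=
  ∫ y, F (Real.exp (-t) * x + Real.sqrt (1 - Real.exp (-2 * t)) * y) ∂(gaussianReal 0 1)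

open NNReal Set Filter

lemma integral_Ioi_mul_exp_neg_mul_sq {b : ℝ} (hb : 0 < b) :
    ∫ r in Ioi (0 : ℝ), r * exp (-b * r ^ 2) = (2 * b)⁻¹ := by
  apply Complex.ofReal_injective
  rw [← integral_complex_ofReal]
  push_cast
  exact integral_mul_cexp_neg_mul_sq (by simpa using hb)

lemma integral_abs_gaussianReal : ∫ y, |y| ∂gaussianReal 0 1 = √(2 / π) := by
  have h : ∫ y, |y| * exp (-2⁻¹ * y ^ 2) = 2 := by
    have : (fun y : ℝ => |y| * exp (-2⁻¹ * y ^ 2))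
        = fun y => |y| * exp (-2⁻¹ * |y| ^ 2) := by
      simp only [sq_abs]
    rw [this, integral_comp_abs (f := fun y => y * exp (-2⁻¹ * y ^ 2)),
      integral_Ioi_mul_exp_neg_mul_sq (by norm_num)]
    norm_num
  rw [integral_gaussianReal_eq_integral_smul one_ne_zero]
  simp only [gaussianPDFReal, smul_eq_mul, NNReal.coe_one, mul_one, sub_zero]
  have hpt : ∀ y : ℝ, (√(2 * π))⁻¹ * exp (-y ^ 2 / 2) * |y|
      = (√(2 * π))⁻¹ * (|y| * exp (-2⁻¹ * y ^ 2)) := fun y => by ring_nf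
  simp_rw [hpt]
  rw [integral_const_mul, h, sqrt_div zero_le_two, sqrt_mul zero_le_two]
  have h2 : √2 * √2 = 2 := mul_self_sqrt zero_le_two
  field_simp
  linarith

lemma integral_comp_const_add_mul_gaussianReal {f : ℝ → ℝ} (hf : Measurable f) (m b : ℝ) :
    ∫ y, f (m + b * y) ∂gaussianReal 0 1
      = ∫ u, f u ∂gaussianReal m ⟨b ^ 2, sq_nonneg b⟩ := by
  have hmap : (gaussianReal 0 1).map (fun y => m + b * y)
      = gaussianReal m ⟨b ^ 2, sq_nonneg b⟩ := by
    rw [show (fun y : ℝ => m + b * y) = (m + ·) ∘ (b * ·) from rfl,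
      ← Measure.map_map (measurable_const_add m) (measurable_const_mul b),
      gaussianReal_map_const_mul, gaussianReal_map_const_add]
    simp only [mul_zero, zero_add, mul_one]
    rfl
  rw [← hmap, integral_map (by fun_prop) hf.aestronglyMeasurable]

lemma integral_abs_sub_gaussianReal (m b : ℝ) :
    ∫ u, |u - m| ∂gaussianReal m ⟨b ^ 2, sq_nonneg b⟩
      = |b| * ∫ y, |y| ∂gaussianReal 0 1 := by
  rw [← integral_comp_const_add_mul_gaussianReal (by fun_prop), ← integral_const_mul]
  simp_rw [add_sub_cancel_left, abs_mul]

lemma integrable_abs_sub_gaussianReal (m c : ℝ) (v : ℝ≥0) :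
    Integrable (fun u => |u - c|) (gaussianReal m v) :=
  (((memLp_id_gaussianReal 1).integrable le_rfl).sub (integrable_const c)).abs

lemma hasDerivAt_integral_comp_mul_add {α : Type*} [MeasurableSpace α] (μ : Measure α)
    [IsFiniteMeasure μ] {G : ℝ → ℝ} (hG : Differentiable ℝ G) (hG' : Continuous (deriv G))
    {B₀ B₁ : ℝ} (hGb : ∀ z, |G z| ≤ B₀) (hG'b : ∀ z, |deriv G z| ≤ B₁)
    {g : α → ℝ} (hg : Measurable g) (a x : ℝ) :
    HasDerivAt (fun x => ∫ y, G (a * x + g y) ∂μ)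
      (a * ∫ y, deriv G (a * x + g y) ∂μ) x := by
  have hmeas : ∀ {H : ℝ → ℝ}, Continuous H →
      ∀ x', AEStronglyMeasurable (fun y => H (a * x' + g y)) μ :=
    fun hH x' => (hH.measurable.comp (measurable_const.add hg)).aestronglyMeasurable
  have hderiv : ∀ y x',
      HasDerivAt (fun x => G (a * x + g y)) (a * deriv G (a * x' + g y)) x' := by
    intro y x'
    have h := (hG (a * x' + g y)).hasDerivAt.comp x'
      (((hasDerivAt_id x').const_mul a).add_const (g y))
    simpa [mul_comm, Function.comp_def] using h
  rw [← integral_const_mul]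
  refine (hasDerivAt_integral_of_dominated_loc_of_deriv_le (bound := fun _ => |a| * B₁)
    (Metric.ball_mem_nhds x one_pos) (Eventually.of_forall (hmeas hG.continuous))
    ((integrable_const B₀).mono' (hmeas hG.continuous x) (ae_of_all _ fun y => hGb _))
    ((hmeas hG' x).const_mul a) (ae_of_all _ fun y x' _ => ?_) (integrable_const _)
    (ae_of_all _ fun y x' _ => hderiv y x')).2
  rw [norm_mul]
  exact mul_le_mul_of_nonneg_left (hG'b _) (abs_nonneg a)

lemma hasDerivAt_gaussianPDFReal_mean (v : ℝ≥0) (u m : ℝ) :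
    HasDerivAt (fun m => gaussianPDFReal m v u) ((u - m) / v * gaussianPDFReal m v u) m := by
  have h := ((((hasDerivAt_id m).const_sub u).pow 2).neg.div_const (2 * (v : ℝ))).exp.const_mul
    (√(2 * π * v))⁻¹
  refine h.congr_deriv ?_
  simp only [gaussianPDFReal, id, Pi.neg_apply, Pi.pow_apply]
  ring

/- Since `(u - m) ^ 2 ≤ 2 * (u - m') ^ 2 + 2`, doubling the variance absorbs a shift of the mean
by at most `1`. -/
lemma abs_sub_mul_gaussianPDFReal_le {v : ℝ≥0} (hv : v ≠ 0) {m m' : ℝ} (h : |m' - m| ≤ 1)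
    (u : ℝ) : |u - m'| * gaussianPDFReal m' v u
      ≤ √2 * exp (1 / (2 * v)) * (gaussianPDFReal m (2 * v) u * (|u - m| + 1)) := by
  have hv' : (0 : ℝ) < v := by positivity
  have hdist : |u - m'| ≤ |u - m| + 1 := by
    calc |u - m'| = |(u - m) - (m' - m)| := by ring_nf
      _ ≤ |u - m| + |m' - m| := abs_sub _ _
      _ ≤ |u - m| + 1 := by linarith
  have hsq : (u - m) ^ 2 ≤ 2 * (u - m') ^ 2 + 2 := by
    have : (m' - m) ^ 2 ≤ 1 := by nlinarith [sq_abs (m' - m), abs_nonneg (m' - m)]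
    nlinarith [sq_nonneg (u - m' - (m' - m))]
  have hexp : exp (-(u - m') ^ 2 / (2 * v))
      ≤ exp (1 / (2 * v)) * exp (-(u - m) ^ 2 / (2 * (2 * v))) := by
    rw [← exp_add, exp_le_exp]
    have : 1 / (2 * v) + -(u - m) ^ 2 / (2 * (2 * v)) - -(u - m') ^ 2 / (2 * v)
        = (2 * (u - m') ^ 2 + 2 - (u - m) ^ 2) / (4 * v) := by
      field_simp
      ring
    linarith [div_nonneg (by linarith : 0 ≤ 2 * (u - m') ^ 2 + 2 - (u - m) ^ 2)
      (by positivity : (0 : ℝ) ≤ 4 * v)]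
  have hnorm : (√(2 * π * v))⁻¹ = √2 * (√(2 * π * (2 * v)))⁻¹ := by
    rw [show 2 * π * (2 * v) = 2 * (2 * π * v) by ring, sqrt_mul zero_le_two]
    field_simp
  have hpdf :
      gaussianPDFReal m' v u ≤ √2 * exp (1 / (2 * v)) * gaussianPDFReal m (2 * v) u := by
    simp only [gaussianPDFReal, NNReal.coe_mul, NNReal.coe_ofNat]
    rw [hnorm, mul_assoc (√2), mul_assoc (√2), mul_left_comm (exp _)]
    gcongr
  calc |u - m'| * gaussianPDFReal m' v u
      ≤ (|u - m| + 1) * (√2 * exp (1 / (2 * v)) * gaussianPDFReal m (2 * v) u) :=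
        mul_le_mul hdist hpdf (gaussianPDFReal_nonneg _ _ _) (by positivity)
    _ = _ := by ring

lemma MeasureTheory.Integrable.gaussianPDFReal_mul {m : ℝ} {v : ℝ≥0} {g : ℝ → ℝ}
    (hg : Integrable g (gaussianReal m v)) (hv : v ≠ 0) :
    Integrable (fun u => gaussianPDFReal m v u * g u) := by
  rw [gaussianReal_of_var_ne_zero _ hv, gaussianPDF_def, integrable_withDensity_iff_integrable_smul'
    (by fun_prop) (ae_of_all _ fun _ => ENNReal.ofReal_lt_top)] at hg
  simpa [ENNReal.toReal_ofReal (gaussianPDFReal_nonneg _ _ _)] using hg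

lemma hasDerivAt_integral_gaussianReal_mean {v : ℝ≥0} (hv : v ≠ 0) {φ : ℝ → ℝ}
    (hφ : Measurable φ) {C : ℝ} (hφC : ∀ u, |φ u| ≤ C) (m : ℝ) :
    HasDerivAt (fun m => ∫ u, φ u ∂gaussianReal m v)
      (∫ u, (u - m) / v * φ u ∂gaussianReal m v) m := by
  have hv2 : 2 * v ≠ 0 := mul_ne_zero two_ne_zero hv
  have hφint : Integrable φ (gaussianReal m v) :=
    (integrable_const C).mono' hφ.aestronglyMeasurable (ae_of_all _ hφC)
  have hbound : Integrable (fun u => gaussianPDFReal m (2 * v) u * (|u - m| + 1)) :=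
    ((integrable_abs_sub_gaussianReal m m _).add (integrable_const 1)).gaussianPDFReal_mul hv2
  simp_rw [integral_gaussianReal_eq_integral_smul hv, smul_eq_mul]
  have key := hasDerivAt_integral_of_dominated_loc_of_deriv_le
    (F' := fun m' u => (u - m') / v * gaussianPDFReal m' v u * φ u)
    (bound := fun u =>
      √2 * exp (1 / (2 * v)) * (C / v) * (gaussianPDFReal m (2 * v) u * (|u - m| + 1)))
    (Metric.ball_mem_nhds m one_pos)
    (Eventually.of_forall fun m' =>
      ((measurable_gaussianPDFReal m' v).mul hφ).aestronglyMeasurable)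
    (hφint.gaussianPDFReal_mul hv)
    (by fun_prop)
    (ae_of_all _ fun u m' hm' => ?_)
    (hbound.const_mul _)
    (ae_of_all _ fun u m' _ => (hasDerivAt_gaussianPDFReal_mean v u m').mul_const (φ u))
  · exact key.2.congr_deriv (integral_congr_ae (ae_of_all _ fun u => by dsimp only; ring))
  · rw [norm_mul, norm_mul, norm_div, Real.norm_eq_abs, Real.norm_eq_abs, Real.norm_eq_abs,
      Real.norm_eq_abs, abs_of_nonneg (gaussianPDFReal_nonneg _ _ _), NNReal.abs_eq,
      div_mul_eq_mul_div]
    have hmaj := abs_sub_mul_gaussianPDFReal_le hv (Metric.mem_ball.mp hm').le u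
    calc |u - m'| * gaussianPDFReal m' v u / v * |φ u|
        ≤ √2 * exp (1 / (2 * v)) * (gaussianPDFReal m (2 * v) u * (|u - m| + 1)) / v * C := by
          gcongr ?_ / _ * ?_
          · exact div_nonneg
              ((mul_nonneg (abs_nonneg _) (gaussianPDFReal_nonneg _ _ _)).trans hmaj) v.2
          · exact hφC u
      _ = _ := by ring

lemma abs_integral_sub_div_mul_gaussianReal_le {v : ℝ≥0} {φ : ℝ → ℝ} {C : ℝ}
    (hφC : ∀ u, |φ u| ≤ C) (m : ℝ) :
    |∫ u, (u - m) / v * φ u ∂gaussianReal m v|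
      ≤ C / v * ∫ u, |u - m| ∂gaussianReal m v := by
  rw [← integral_const_mul, ← Real.norm_eq_abs]
  refine norm_integral_le_of_norm_le ((integrable_abs_sub_gaussianReal m m v).const_mul (C / v))
    (ae_of_all _ fun u => ?_)
  rw [norm_mul, norm_div, Real.norm_eq_abs, Real.norm_eq_abs, Real.norm_eq_abs, NNReal.abs_eq,
    div_mul_eq_mul_div, div_mul_eq_mul_div, mul_comm C]
  gcongr
  exact hφC u

lemma exists_hasDerivAt_integral_comp_mul_add_gaussianReal {φ : ℝ → ℝ} (hφ : Measurable φ)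
    {C : ℝ} (hφC : ∀ z, |φ z| ≤ C) (a : ℝ) {b : ℝ} (hb : 0 < b) (x : ℝ) :
    ∃ D, HasDerivAt (fun x => ∫ y, φ (a * x + b * y) ∂gaussianReal 0 1) D x ∧
      |D| ≤ |a| / b * C * ∫ y, |y| ∂gaussianReal 0 1 := by
  set v : ℝ≥0 := ⟨b ^ 2, sq_nonneg b⟩
  have hv : v ≠ 0 := NNReal.coe_ne_zero.mp (pow_ne_zero 2 hb.ne')
  have hcomp : (fun x => ∫ y, φ (a * x + b * y) ∂gaussianReal 0 1)
      = (fun m => ∫ u, φ u ∂gaussianReal m v) ∘ (a * ·) :=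
    funext fun x => integral_comp_const_add_mul_gaussianReal hφ (a * x) b
  refine ⟨_, hcomp ▸ (hasDerivAt_integral_gaussianReal_mean hv hφ hφC (a * x)).comp x
    ((hasDerivAt_id x).const_mul a), ?_⟩
  have hE : 0 ≤ ∫ y, |y| ∂gaussianReal 0 1 := integral_nonneg fun y => abs_nonneg y
  rw [abs_mul, mul_one]
  calc _ ≤ C / v * (∫ u, |u - a * x| ∂gaussianReal (a * x) v) * |a| := by
        gcongr
        exact abs_integral_sub_div_mul_gaussianReal_le hφC (a * x)
    _ = |a| / b * C * ∫ y, |y| ∂gaussianReal 0 1 := by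
        rw [integral_abs_sub_gaussianReal, abs_of_pos hb, show (v : ℝ) = b ^ 2 from rfl]
        field_simp

/-- **Uniform bound on the third derivative of the Ornstein–Uhlenbeck semigroup**: if
`F ∈ C²_b` with `‖F″‖_∞ ≤ C`, then for every `t > 0` and every `x`,
`|(P_t F)‴(x)| ≤ (e^{-3t}/√(1−e^{-2t})) · C · ∫ |y| dγ(y)
             = (e^{-3t}/√(1−e^{-2t})) · C · √(2/π)`. -/
theorem ouSemigroup_third_deriv_bound
    (F : ℝ → ℝ) (hF : ContDiff ℝ 2 F) (C : ℝ)
    (hFb : ∃ B, ∀ x, |F x| ≤ B)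
    (hF'b : ∃ B, ∀ x, |deriv F x| ≤ B)
    (hF''b : ∀ x, |deriv (deriv F) x| ≤ C)
    (t : ℝ) (ht : 0 < t) (x : ℝ) :
    |iteratedDeriv 3 (fun z => ouSemigroup t F z) x|
      ≤ Real.exp (-3 * t) / Real.sqrt (1 - Real.exp (-2 * t)) * C
          * ∫ y, |y| ∂(gaussianReal 0 1)
    ∧ (∫ y, |y| ∂(gaussianReal 0 1)) = Real.sqrt (2 / Real.pi) := by
  refine ⟨?_, integral_abs_gaussianReal⟩
  obtain ⟨B₀, hB₀⟩ := hFb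
  obtain ⟨B₁, hB₁⟩ := hF'b
  set a := exp (-t)
  set b := √(1 - exp (-2 * t))
  have ha : 0 < a := exp_pos _
  have hb : 0 < b := sqrt_pos.mpr (sub_pos.mpr (exp_lt_one_iff.mpr (by linarith)))
  have hF' : ContDiff ℝ 1 (deriv F) := hF.deriv'
  have hP' : deriv (ouSemigroup t F)
      = fun x => a * ∫ y, deriv F (a * x + b * y) ∂gaussianReal 0 1 :=
    funext fun x => (hasDerivAt_integral_comp_mul_add _ (hF.differentiable two_ne_zero)
      (hF.continuous_deriv one_le_two) hB₀ hB₁ (measurable_const_mul b) a x).deriv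
  have hP'' : deriv (deriv (ouSemigroup t F))
      = fun x => a * (a * ∫ y, deriv (deriv F) (a * x + b * y) ∂gaussianReal 0 1) := by
    rw [hP']
    exact funext fun x => ((hasDerivAt_integral_comp_mul_add _ (hF'.differentiable one_ne_zero)
      (hF'.continuous_deriv le_rfl) hB₁ hF''b (measurable_const_mul b) a x).const_mul a).deriv
  obtain ⟨D, hD, hDle⟩ := exists_hasDerivAt_integral_comp_mul_add_gaussianReal
    (hF'.continuous_deriv le_rfl).measurable hF''b a hb x
  have hP''' : iteratedDeriv 3 (ouSemigroup t F) x = a * (a * D) := by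
    rw [iteratedDeriv_eq_iterate, Function.iterate_succ_apply', Function.iterate_succ_apply',
      Function.iterate_one, hP'']
    exact ((hD.const_mul a).const_mul a).deriv
  have ha3 : exp (-3 * t) = a * a * a := by
    simp only [a, ← exp_add]
    ring_nf
  rw [hP''', abs_mul, abs_mul, abs_of_pos ha, ha3]
  calc a * (a * |D|) ≤ a * (a * (|a| / b * C * ∫ y, |y| ∂gaussianReal 0 1)) := by gcongr
    _ = _ := by
      rw [abs_of_pos ha]
      ring
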